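/- For a function v : Q(N) → ℝ with Möbius transform m, and for any i ∈ N and (S,T) ∈ Q(N\{i}), the left derivative satisfies v(S∪{i},T) - v(S,T) = ∑_{(S',T') ∈ [({i}, N\{i}), (S∪{i}, T)]} m(S',T'), where the interval is taken in the lattice order ⊑ on Q(N). -/

import Mathlib

/-!
Möbius inversion on Q(N): for disjoint (S, T), v(S, T) is the sum of m(A, A') over the pairs
(A, A') ⊑ (S, T). Indeed, after exchanging the order of summation, the coefficient of v(B, B') is
a product of two alternating sums ∑_{B ⊆ A ⊆ C} (-1)^|A \ B| and ∑_{B ⊆ A ⊆ C} (-1)^|C \ A|, each of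
which vanishes unless B = C. Applying this at (S ∪ {i}, T) and at (S, T), the terms with i ∉ A
cancel, and the remaining ones, i ∈ A, are exactly the interval [({i}, N \ {i}), (S ∪ {i}, T)].
-/

open Finset

/-- The Möbius transform of a function on Q(N). -/
def biMobius {V : Type*} [Fintype V] [DecidableEq V]
    (v : Finset V × Finset V → ℝ) (A A' : Finset V) : ℝ :=
  ∑ B ∈ A.powerset, ∑ B' ∈ (Aᶜ).powerset.filter (fun B' => A' ⊆ B'),
    (-1 : ℝ) ^ ((A \ B).card + (B' \ A').card) * v (B, B')

section BooleanInversion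

variable {α R : Type*} [DecidableEq α] [Ring R]

theorem sum_powerset_neg_one_pow_card_eq_ite (D : Finset α) :
    ∑ E ∈ D.powerset, (-1 : R) ^ #E = if D = ∅ then 1 else 0 := by
  have := congrArg (Int.cast : ℤ → R) (sum_powerset_neg_one_pow_card (x := D))
  push_cast at this
  simpa [apply_ite (Int.cast : ℤ → R)] using this

theorem sum_Icc_neg_one_pow_card_sdiff_left (B C : Finset α) :
    ∑ A ∈ Icc B C, (-1 : R) ^ #(A \ B) = if B = C then 1 else 0 := by
  by_cases hBC : B ⊆ C
  · rw [sum_nbij' (· \ B) (B ∪ ·) (t := (C \ B).powerset) (g := fun E => (-1 : R) ^ #E)]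
    · rw [sum_powerset_neg_one_pow_card_eq_ite]
      exact if_congr (sdiff_eq_empty_iff_subset.trans ⟨Subset.antisymm hBC, Eq.superset⟩) rfl rfl
    all_goals intro A hA; simp only [mem_Icc, mem_powerset] at hA ⊢
    all_goals grind
  · rw [Icc_eq_empty (by simpa using hBC), sum_empty, if_neg (by rintro rfl; exact hBC le_rfl)]

theorem sum_Icc_neg_one_pow_card_sdiff_right (B C : Finset α) :
    ∑ A ∈ Icc B C, (-1 : R) ^ #(C \ A) = if B = C then 1 else 0 := by
  by_cases hBC : B ⊆ C
  · rw [sum_nbij' (C \ ·) (C \ ·) (t := (C \ B).powerset) (g := fun E => (-1 : R) ^ #E)]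
    · rw [sum_powerset_neg_one_pow_card_eq_ite]
      exact if_congr (sdiff_eq_empty_iff_subset.trans ⟨Subset.antisymm hBC, Eq.superset⟩) rfl rfl
    all_goals intro A hA; simp only [mem_Icc, mem_powerset] at hA ⊢
    all_goals grind
  · rw [Icc_eq_empty (by simpa using hBC), sum_empty, if_neg (by rintro rfl; exact hBC le_rfl)]

theorem sum_powerset_sum_powerset_neg_one_pow_mul (g : Finset α → R) (S : Finset α) :
    ∑ A ∈ S.powerset, ∑ B ∈ A.powerset, (-1 : R) ^ #(A \ B) * g B = g S := by
  rw [sum_comm' (t' := S.powerset) (s' := fun B => Icc B S)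
    (by intro A B; simp only [mem_powerset, mem_Icc]; grind)]
  simp_rw [← sum_mul, sum_Icc_neg_one_pow_card_sdiff_left, ite_mul, one_mul, zero_mul]
  simp

theorem sum_Icc_sum_Icc_neg_one_pow_mul (h : Finset α → R) {T U : Finset α} (hTU : T ⊆ U) :
    ∑ A ∈ Icc T U, ∑ B ∈ Icc A U, (-1 : R) ^ #(B \ A) * h B = h T := by
  rw [sum_comm' (t' := Icc T U) (s' := fun B => Icc T B)
    (by intro A B; simp only [mem_Icc]; grind)]
  simp_rw [← sum_mul, sum_Icc_neg_one_pow_card_sdiff_right, ite_mul, one_mul, zero_mul]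
  simp [hTU]

end BooleanInversion

section BiMobius

variable {V : Type*} [Fintype V] [DecidableEq V]

theorem biMobius_eq_sum_powerset_sum_Icc (v : Finset V × Finset V → ℝ) (A A' : Finset V) :
    biMobius v A A' = ∑ B ∈ A.powerset, (-1 : ℝ) ^ #(A \ B) *
      ∑ B' ∈ Icc A' Aᶜ, (-1 : ℝ) ^ #(B' \ A') * v (B, B') := by
  simp only [biMobius, Icc_eq_filter_powerset, pow_add, mul_sum, mul_assoc]

theorem sum_biMobius_below_of_disjoint (v : Finset V × Finset V → ℝ) {S T : Finset V}
    (hST : Disjoint S T) :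
    ∑ p ∈ univ.filter (fun p : Finset V × Finset V => Disjoint p.1 p.2 ∧ p.1 ⊆ S ∧ T ⊆ p.2),
      biMobius v p.1 p.2 = v (S, T) := by
  rw [sum_finset_product _ S.powerset (fun A => Icc T Aᶜ) (by
    intro p; simp only [mem_filter, mem_univ, true_and, mem_powerset, mem_Icc,
      subset_compl_iff_disjoint_left]; tauto)]
  calc ∑ A ∈ S.powerset, ∑ A' ∈ Icc T Aᶜ, biMobius v A A'
      = ∑ A ∈ S.powerset, ∑ B ∈ A.powerset, (-1 : ℝ) ^ #(A \ B) *
          ∑ A' ∈ Icc T Aᶜ, ∑ B' ∈ Icc A' Aᶜ, (-1 : ℝ) ^ #(B' \ A') * v (B, B') := by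
        simp_rw [biMobius_eq_sum_powerset_sum_Icc, mul_sum]
        exact sum_congr rfl fun A _ => sum_comm
    _ = ∑ A ∈ S.powerset, ∑ B ∈ A.powerset, (-1 : ℝ) ^ #(A \ B) * v (B, T) := by
        refine sum_congr rfl fun A hA => sum_congr rfl fun B _ => ?_
        rw [sum_Icc_sum_Icc_neg_one_pow_mul (fun B' => v (B, B'))
          (subset_compl_iff_disjoint_left.2 (hST.mono_left (mem_powerset.1 hA)))]
    _ = v (S, T) := sum_powerset_sum_powerset_neg_one_pow_mul (fun B => v (B, T)) S

end BiMobius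

/-- the left derivative of v at (S,T) w.r.t. i equals the sum of
the Möbius transform over the interval [({i}, N\{i}), (S∪{i}, T)] of Q(N). -/
theorem stmt_14 (V : Type*) [Fintype V] [DecidableEq V]
    (v : Finset V × Finset V → ℝ) (i : V) (S T : Finset V)
    (hST : Disjoint S T) (hiS : i ∉ S) (hiT : i ∉ T) :
    v (insert i S, T) - v (S, T) =
      ∑ p ∈ univ.filter (fun p : Finset V × Finset V =>
          Disjoint p.1 p.2 ∧
          ({i} : Finset V) ⊆ p.1 ∧ p.2 ⊆ ({i} : Finset V)ᶜ ∧
          p.1 ⊆ insert i S ∧ T ⊆ p.2),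
        biMobius v p.1 p.2 := by
  have hiST : Disjoint (insert i S) T := disjoint_insert_left.2 ⟨hiT, hST⟩
  have with_i : ∀ p : Finset V × Finset V,
      (Disjoint p.1 p.2 ∧ p.1 ⊆ insert i S ∧ T ⊆ p.2) ∧ i ∈ p.1 ↔
        Disjoint p.1 p.2 ∧ {i} ⊆ p.1 ∧ p.2 ⊆ {i}ᶜ ∧ p.1 ⊆ insert i S ∧ T ⊆ p.2 := by
    intro p
    simp only [singleton_subset_iff, subset_compl_singleton]
    grind [disjoint_left]
  have without_i : ∀ p : Finset V × Finset V,
      (Disjoint p.1 p.2 ∧ p.1 ⊆ insert i S ∧ T ⊆ p.2) ∧ i ∉ p.1 ↔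
        Disjoint p.1 p.2 ∧ p.1 ⊆ S ∧ T ⊆ p.2 := by
    intro p
    constructor
    · rintro ⟨⟨hd, hsub, hT⟩, hi⟩
      exact ⟨hd, (subset_insert_iff_of_notMem hi).1 hsub, hT⟩
    · rintro ⟨hd, hsub, hT⟩
      exact ⟨⟨hd, hsub.trans (subset_insert i S), hT⟩, fun hi => hiS (hsub hi)⟩
  rw [← sum_biMobius_below_of_disjoint v hiST, ← sum_biMobius_below_of_disjoint v hST,
    ← sum_filter_add_sum_filter_not _ (fun p => i ∈ p.1), filter_filter, filter_filter,
    filter_congr fun p _ => with_i p, filter_congr fun p _ => without_i p, add_sub_cancel_right]
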